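/- Let a1, a2 ∈ H_A and b1, b2 ∈ H_B be unit vectors with c_A = |⟨a1, a2⟩|² and c_B = |⟨b1, b2⟩|², set ψ_j = a_j ⊗ b_j, and let S = { (x_{1,A}·x_{1,B}, x_{2,A}·x_{2,B}) : (x_{1,A}, x_{2,A}) ∈ E_{c_A}, (x_{1,B}, x_{2,B}) ∈ E_{c_B} }. Then (0,0) ∈ S ∪ conv(S), and for all unit vectors α ∈ H_A and β ∈ H_B, the pair (|⟨ψ1, α ⊗ β⟩|², |⟨ψ2, α ⊗ β⟩|²) lies in the convex hull of S. -/

import Mathlib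

open scoped ComplexInnerProductSpace
noncomputable section

/-- `HSp n` models a complex inner product space of dimension `n`. -/
abbrev HSp (n : ℕ) := EuclideanSpace ℂ (Fin n)

/-- `HT m n` models the tensor product `HSp m ⊗ HSp n`, with its induced inner product. -/
abbrev HT (m n : ℕ) := EuclideanSpace ℂ (Fin m × Fin n)

/-- The product (tensor) vector `a ⊗ b`. -/
def tmul {m n : ℕ} (a : HSp m) (b : HSp n) : HT m n :=
  (WithLp.equiv 2 _).symm fun p => a p.1 * b p.2

/-- `ψ` is a product vector. -/
def IsProd {m n : ℕ} (ψ : HT m n) : Prop := ∃ a b, ψ = tmul a b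

/-- The rank-one operator `|ψ⟩⟨ψ| : φ ↦ ⟨ψ, φ⟩ • ψ`; for a unit vector `ψ` this is the
orthogonal projection onto the span of `ψ`. -/
def rankOne {H : Type*} [NormedAddCommGroup H] [InnerProductSpace ℂ H] (ψ : H) :
    H →ₗ[ℂ] H := ((innerSL ℂ ψ).toLinearMap).smulRight ψ

/-- A density operator: positive semidefinite (self-adjoint) with trace one. -/
def IsDensity {H : Type*} [NormedAddCommGroup H] [InnerProductSpace ℂ H]
    [FiniteDimensional ℂ H] (ρ : H →ₗ[ℂ] H) : Prop :=
  LinearMap.IsSymmetric ρ ∧ (∀ x, 0 ≤ (⟪x, ρ x⟫).re) ∧ LinearMap.trace ℂ H ρ = 1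

/-- A separable density operator: a member of the convex hull of the set of rank-one
orthogonal projections onto unit product vectors. -/
def IsSepDensity {m n : ℕ} (σ : HT m n →ₗ[ℂ] HT m n) : Prop :=
  σ ∈ convexHull ℝ
    {P | ∃ (a : HSp m) (b : HSp n), ‖a‖ = 1 ∧ ‖b‖ = 1 ∧ P = rankOne (tmul a b)}

/-- The largest (real) eigenvalue `λmax` of an operator. -/
def lamMax {H : Type*} [NormedAddCommGroup H] [InnerProductSpace ℂ H]
    [FiniteDimensional ℂ H] (M : H →ₗ[ℂ] H) : ℝ :=
  sSup {t : ℝ | Module.End.HasEigenvalue M (t : ℂ)}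

/-- `sup { Tr(σ M) : σ a separable density operator }`. -/
def sepSup {m n : ℕ} (M : HT m n →ₗ[ℂ] HT m n) : ℝ :=
  sSup {t : ℝ | ∃ σ, IsSepDensity σ ∧ t = (LinearMap.trace ℂ _ (σ ∘ₗ M)).re}

/-- For `c ∈ [0,1]`, the region
`E_c = {(x1,x2) ∈ [0,1]² : (x1 + x2 − (1 − c))² ≤ 4·c·x1·x2}`. -/
def Ecal (c : ℝ) : Set (ℝ × ℝ) :=
  {x | x.1 ∈ Set.Icc (0 : ℝ) 1 ∧ x.2 ∈ Set.Icc (0 : ℝ) 1 ∧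
    (x.1 + x.2 - (1 - c)) ^ 2 ≤ 4 * c * x.1 * x.2}


private lemma bessel2 {H : Type*} [NormedAddCommGroup H] [InnerProductSpace ℂ H]
    (a w x : H) (ha : ‖a‖ = 1) (hx : ‖x‖ = 1) (haw : ⟪a, w⟫ = 0) :
    ‖⟪w, x⟫‖ ^ 2 ≤ ‖w‖ ^ 2 * (1 - ‖⟪a, x⟫‖ ^ 2) := by
  rcases eq_or_ne w 0 with rfl | hw
  · simp
  · have hwn : (0:ℝ) < ‖w‖ := norm_pos_iff.mpr hw
    have hsm : (‖w‖⁻¹ : ℝ) • w = ((‖w‖⁻¹ : ℝ) : ℂ) • w :=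
      RCLike.real_smul_eq_coe_smul (K := ℂ) _ _
    have hon : Orthonormal ℂ ![a, ‖w‖⁻¹ • w] := by
      constructor
      · intro i
        fin_cases i
        · simpa using ha
        · simp [norm_smul, abs_of_pos hwn, inv_mul_cancel₀ hwn.ne']
      · intro i j hij
        fin_cases i <;> fin_cases j <;>
          simp_all [hsm, inner_smul_left, inner_smul_right, inner_eq_zero_symm.mp haw, haw]
    have hb := hon.sum_inner_products_le (s := Finset.univ) x
    rw [hx, one_pow, Fin.sum_univ_two] at hb
    have h0 : ‖⟪(![a, ‖w‖⁻¹ • w] : Fin 2 → H) 1, x⟫‖ ^ 2 = (‖w‖⁻¹) ^ 2 * ‖⟪w, x⟫‖ ^ 2 := by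
      simp [hsm, inner_smul_left, norm_mul, mul_pow, abs_of_pos hwn]
      ring
    have h1 : ‖⟪(![a, ‖w‖⁻¹ • w] : Fin 2 → H) 0, x⟫‖ = ‖⟪a, x⟫‖ := by simp
    rw [h0, h1] at hb
    have h2 : (‖w‖⁻¹) ^ 2 * ‖⟪w, x⟫‖ ^ 2 ≤ 1 - ‖⟪a, x⟫‖ ^ 2 := by linarith
    calc ‖⟪w, x⟫‖ ^ 2 = ‖w‖ ^ 2 * ((‖w‖⁻¹) ^ 2 * ‖⟪w, x⟫‖ ^ 2) := by
          field_simp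
      _ ≤ ‖w‖ ^ 2 * (1 - ‖⟪a, x⟫‖ ^ 2) := mul_le_mul_of_nonneg_left h2 (by positivity)

private lemma key_ineq {H : Type*} [NormedAddCommGroup H] [InnerProductSpace ℂ H]
    (a b x : H) (ha : ‖a‖ = 1) (hb : ‖b‖ = 1) (hx : ‖x‖ = 1) :
    ‖⟪a, x⟫‖ ^ 2 + ‖⟪b, x⟫‖ ^ 2 - (1 - ‖⟪a, b⟫‖ ^ 2) ≤
      2 * ‖⟪a, b⟫‖ * ‖⟪a, x⟫‖ * ‖⟪b, x⟫‖ := by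
  have haa : ⟪a, a⟫ = (1 : ℂ) := by
    rw [inner_self_eq_norm_sq_to_K, ha]; norm_num
  set w : H := b - (⟪a, b⟫ : ℂ) • a with hwdef
  have haw : ⟪a, w⟫ = 0 := by
    simp [hwdef, inner_sub_right, inner_smul_right, haa, ha]
  have hwx : ⟪w, x⟫ = ⟪b, x⟫ - (starRingEnd ℂ) ⟪a, b⟫ * ⟪a, x⟫ := by
    simp [hwdef, inner_sub_left, inner_smul_left]
    ring
  have hwn : ‖w‖ ^ 2 = 1 - ‖(⟪a, b⟫ : ℂ)‖ ^ 2 := by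
    rw [hwdef, @norm_sub_sq ℂ]
    have h1 : ⟪b, (⟪a, b⟫ : ℂ) • a⟫ = ⟪a, b⟫ * (starRingEnd ℂ) ⟪a, b⟫ := by
      rw [inner_smul_right, ← inner_conj_symm b a]
    rw [h1, norm_smul, ha, hb, RCLike.mul_conj, ← RCLike.ofReal_pow, RCLike.ofReal_re]
    ring
  have hbes := bessel2 a w x ha hx haw
  rw [hwn] at hbes
  have htri : |‖⟪b, x⟫‖ - ‖(⟪a, b⟫ : ℂ)‖ * ‖⟪a, x⟫‖| ≤ ‖⟪w, x⟫‖ := by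
    have h3 := abs_norm_sub_norm_le (⟪b, x⟫) ((starRingEnd ℂ) ⟪a, b⟫ * ⟪a, x⟫)
    rw [← hwx, norm_mul, RCLike.norm_conj] at h3
    exact h3
  have hsq : (‖⟪b, x⟫‖ - ‖(⟪a, b⟫ : ℂ)‖ * ‖⟪a, x⟫‖) ^ 2 ≤
      (1 - ‖(⟪a, b⟫ : ℂ)‖ ^ 2) * (1 - ‖⟪a, x⟫‖ ^ 2) := by
    calc (‖⟪b, x⟫‖ - ‖(⟪a, b⟫ : ℂ)‖ * ‖⟪a, x⟫‖) ^ 2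
        = |‖⟪b, x⟫‖ - ‖(⟪a, b⟫ : ℂ)‖ * ‖⟪a, x⟫‖| ^ 2 := (sq_abs _).symm
      _ ≤ ‖⟪w, x⟫‖ ^ 2 := pow_le_pow_left₀ (abs_nonneg _) htri 2
      _ ≤ _ := hbes
  nlinarith [hsq]

private lemma inner_tmul {m n : ℕ} (a : HSp m) (b : HSp n) (α : HSp m) (β : HSp n) :
    ⟪tmul a b, tmul α β⟫ = ⟪a, α⟫ * ⟪b, β⟫ := by
  simp only [tmul, PiLp.inner_apply, RCLike.inner_apply, WithLp.equiv_symm_apply, PiLp.toLp_apply, WithLp.ofLp_toLp, map_mul]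
  rw [Fintype.sum_prod_type, Finset.sum_mul_sum]
  exact Finset.sum_congr rfl fun i _ => Finset.sum_congr rfl fun j _ => by ring

private lemma geom {c x1 x2 : ℝ} (hc0 : 0 ≤ c) (hc1 : c ≤ 1)
    (h10 : 0 ≤ x1) (h11 : x1 ≤ 1) (h20 : 0 ≤ x2) (h21 : x2 ≤ 1)
    (h : x1 + x2 - (1 - c) ≤ 2 * Real.sqrt c * Real.sqrt x1 * Real.sqrt x2) :
    ∃ t, 0 ≤ t ∧ t ≤ 1 ∧ ∃ u ∈ Ecal c, x1 = t * u.1 ∧ x2 = t * u.2 := by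
  rcases le_or_gt (1 - c) (x1 + x2) with hge | hlt
  · refine ⟨1, zero_le_one, le_refl 1, (x1, x2), ?_, by ring, by ring⟩
    refine ⟨⟨h10, h11⟩, ⟨h20, h21⟩, ?_⟩
    have h0 : 0 ≤ x1 + x2 - (1 - c) := by linarith
    have hsq : (x1 + x2 - (1 - c)) ^ 2 ≤ (2 * Real.sqrt c * Real.sqrt x1 * Real.sqrt x2) ^ 2 :=
      pow_le_pow_left₀ h0 h 2
    have he : (2 * Real.sqrt c * Real.sqrt x1 * Real.sqrt x2) ^ 2 = 4 * c * x1 * x2 := by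
      rw [mul_pow, mul_pow, mul_pow, Real.sq_sqrt hc0, Real.sq_sqrt h10, Real.sq_sqrt h20]
      ring
    linarith [hsq, he.le, he.ge]
  · rcases eq_or_lt_of_le (by positivity : (0:ℝ) ≤ x1 + x2) with hz | hpos
    · have hx1 : x1 = 0 := by linarith
      have hx2 : x2 = 0 := by linarith
      refine ⟨0, le_refl 0, zero_le_one, (0, 1 - c), ?_, by simp [hx1], by simp [hx2]⟩
      refine ⟨⟨le_refl 0, zero_le_one⟩,
        ⟨show (0:ℝ) ≤ 1 - c by linarith, show (1:ℝ) - c ≤ 1 by linarith⟩, by ring_nf; positivity⟩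
    · have hc1' : 0 < 1 - c := lt_of_le_of_lt (by positivity) hlt
      have hs : 0 < x1 + x2 := hpos
      refine ⟨(x1 + x2) / (1 - c), by positivity, by
        rw [div_le_one hc1']; linarith, ((1 - c) * x1 / (x1 + x2), (1 - c) * x2 / (x1 + x2)),
        ?_, ?_, ?_⟩
      · refine ⟨⟨by positivity, ?_⟩, ⟨by positivity, ?_⟩, ?_⟩
        · rw [div_le_one hs]; nlinarith
        · rw [div_le_one hs]; nlinarith
        · have he : (1 - c) * x1 / (x1 + x2) + (1 - c) * x2 / (x1 + x2) - (1 - c) = 0 := by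
            field_simp
            ring
          rw [he, zero_pow two_ne_zero]
          positivity
      · field_simp
      · field_simp

private lemma sq_inner_le_one {H : Type*} [NormedAddCommGroup H] [InnerProductSpace ℂ H]
    (a x : H) (ha : ‖a‖ = 1) (hx : ‖x‖ = 1) : ‖⟪a, x⟫‖ ^ 2 ≤ 1 := by
  have h := norm_inner_le_norm (𝕜 := ℂ) a x
  rw [ha, hx, one_mul] at h
  exact pow_le_one₀ (norm_nonneg _) h

/-- For unit vectors `a1, a2, b1, b2` with local fidelities `c_A, c_B`,
`ψj = aj ⊗ bj` and `S` the pointwise-product set of `E_{c_A}` and `E_{c_B}`: `(0,0)` lies in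
`S ∪ conv(S)`, and for all unit vectors `α, β` the pair
`(|⟨ψ1, α ⊗ β⟩|², |⟨ψ2, α ⊗ β⟩|²)` lies in the convex hull of `S`. -/
theorem stmt_15 {dA dB : ℕ} (hdA : 2 ≤ dA) (hdB : 2 ≤ dB)
    (a1 a2 : HSp dA) (b1 b2 : HSp dB)
    (ha1 : ‖a1‖ = 1) (ha2 : ‖a2‖ = 1) (hb1 : ‖b1‖ = 1) (hb2 : ‖b2‖ = 1)
    (cA cB : ℝ) (hcA : cA = ‖⟪a1, a2⟫‖ ^ 2) (hcB : cB = ‖⟪b1, b2⟫‖ ^ 2)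
    (S : Set (ℝ × ℝ))
    (hS : S = {x : ℝ × ℝ | ∃ u ∈ Ecal cA, ∃ v ∈ Ecal cB, x = (u.1 * v.1, u.2 * v.2)}) :
    ((0 : ℝ), (0 : ℝ)) ∈ S ∪ convexHull ℝ S ∧
    ∀ (α : HSp dA) (β : HSp dB), ‖α‖ = 1 → ‖β‖ = 1 →
      ((‖⟪tmul a1 b1, tmul α β⟫‖ ^ 2, ‖⟪tmul a2 b2, tmul α β⟫‖ ^ 2) : ℝ × ℝ) ∈
        convexHull ℝ S := by
  have hcA0 : 0 ≤ cA := by rw [hcA]; positivity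
  have hcB0 : 0 ≤ cB := by rw [hcB]; positivity
  have hcA1 : cA ≤ 1 := by rw [hcA]; exact sq_inner_le_one a1 a2 ha1 ha2
  have hcB1 : cB ≤ 1 := by rw [hcB]; exact sq_inner_le_one b1 b2 hb1 hb2
  have hzero : ((0 : ℝ), (0 : ℝ)) ∈ S := by
    rw [hS]
    refine ⟨(0, 1 - cA), ⟨⟨le_refl 0, zero_le_one⟩,
      ⟨show (0:ℝ) ≤ 1 - cA by linarith, show (1:ℝ) - cA ≤ 1 by linarith⟩,
      by ring_nf; positivity⟩, (1 - cB, 0),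
      ⟨⟨show (0:ℝ) ≤ 1 - cB by linarith, show (1:ℝ) - cB ≤ 1 by linarith⟩,
      ⟨le_refl 0, zero_le_one⟩, by ring_nf; positivity⟩, by simp⟩
  refine ⟨Or.inl hzero, ?_⟩
  intro α β hα hβ
  have hp : ((‖⟪tmul a1 b1, tmul α β⟫‖ ^ 2, ‖⟪tmul a2 b2, tmul α β⟫‖ ^ 2) : ℝ × ℝ)
      = (‖⟪a1, α⟫‖ ^ 2 * ‖⟪b1, β⟫‖ ^ 2, ‖⟪a2, α⟫‖ ^ 2 * ‖⟪b2, β⟫‖ ^ 2) := by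
    rw [inner_tmul, inner_tmul, norm_mul, norm_mul, mul_pow, mul_pow]
  rw [hp]
  have hA : ‖⟪a1, α⟫‖ ^ 2 + ‖⟪a2, α⟫‖ ^ 2 - (1 - cA) ≤
      2 * Real.sqrt cA * Real.sqrt (‖⟪a1, α⟫‖ ^ 2) * Real.sqrt (‖⟪a2, α⟫‖ ^ 2) := by
    rw [hcA, Real.sqrt_sq (norm_nonneg _), Real.sqrt_sq (norm_nonneg _),
      Real.sqrt_sq (norm_nonneg _)]
    exact key_ineq a1 a2 α ha1 ha2 hα
  have hB : ‖⟪b1, β⟫‖ ^ 2 + ‖⟪b2, β⟫‖ ^ 2 - (1 - cB) ≤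
      2 * Real.sqrt cB * Real.sqrt (‖⟪b1, β⟫‖ ^ 2) * Real.sqrt (‖⟪b2, β⟫‖ ^ 2) := by
    rw [hcB, Real.sqrt_sq (norm_nonneg _), Real.sqrt_sq (norm_nonneg _),
      Real.sqrt_sq (norm_nonneg _)]
    exact key_ineq b1 b2 β hb1 hb2 hβ
  obtain ⟨tA, htA0, htA1, uA, huA, hxA1, hxA2⟩ :=
    geom hcA0 hcA1 (by positivity) (sq_inner_le_one a1 α ha1 hα) (by positivity)
      (sq_inner_le_one a2 α ha2 hα) hA
  obtain ⟨tB, htB0, htB1, uB, huB, hxB1, hxB2⟩ :=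
    geom hcB0 hcB1 (by positivity) (sq_inner_le_one b1 β hb1 hβ) (by positivity)
      (sq_inner_le_one b2 β hb2 hβ) hB
  have hmemS1 : ((uA.1 * uB.1, uA.2 * uB.2) : ℝ × ℝ) ∈ S := by
    rw [hS]; exact ⟨uA, huA, uB, huB, rfl⟩
  have hcomb := (convex_convexHull ℝ S) (subset_convexHull ℝ S hmemS1)
    (subset_convexHull ℝ S hzero) (mul_nonneg htA0 htB0)
    (by nlinarith : (0:ℝ) ≤ 1 - tA * tB) (by ring)
  have heq : ((‖⟪a1, α⟫‖ ^ 2 * ‖⟪b1, β⟫‖ ^ 2, ‖⟪a2, α⟫‖ ^ 2 * ‖⟪b2, β⟫‖ ^ 2) : ℝ × ℝ)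
      = (tA * tB) • ((uA.1 * uB.1, uA.2 * uB.2) : ℝ × ℝ) +
        (1 - tA * tB) • (((0 : ℝ), (0 : ℝ)) : ℝ × ℝ) := by
    rw [hxA1, hxA2, hxB1, hxB2]
    simp only [Prod.smul_mk, Prod.mk_add_mk, smul_eq_mul, Prod.mk.injEq]
    constructor <;> ring
  rw [heq]
  exact hcomb
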